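/- arXiv:2412.04389 — 2 statements merged into one kernel-verified Lean document; each statement's English description precedes it below -/
import Mathlib

section
/- For any hypergraph H, |V(H)| - b_L(H) = |V(H^*)| - b_L(H^*); equivalently, b_L(H^*) = |E(H)| - |V(H)| + b_L(H). -/
open scoped Classical

section Defs

variable {V E : Type*}

/-- The set of vertices eventually burned when `B` is initially burned:
a vertex burns if it is initially burned, or if some hyperedge contains it and
all other vertices of that hyperedge are burned. -/
inductive Burns (edges : E → Finset V) (B : Set V) : V → Prop
  | init (v : V) : v ∈ B → Burns edges B v
  | spread (h : E) (v : V) : v ∈ edges h →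
      (∀ u, u ∈ edges h → u ≠ v → Burns edges B u) → Burns edges B v

/-- `B` is a lazy burning set if every vertex eventually burns. -/
def IsLazyBurningSet (edges : E → Finset V) (B : Set V) : Prop :=
  ∀ v, Burns edges B v

/-- The lazy burning number: minimum size of a lazy burning set. -/
noncomputable def lazyBurningNumber [Fintype V] (edges : E → Finset V) : ℕ :=
  sInf {n | ∃ B : Finset V, B.card = n ∧ IsLazyBurningSet edges ↑B}

/-- A `C`-matching in the incidence graph: a list of incidence pairs `(vᵢ, hᵢ)`
with the `vᵢ` distinct, such that `hᵢ` contains none of the later vertices. -/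
def IsCMatching (edges : E → Finset V) (L : List (V × E)) : Prop :=
  (∀ p ∈ L, p.1 ∈ edges p.2) ∧ (L.map Prod.fst).Nodup ∧
  ∀ i j (hi : i < L.length) (hj : j < L.length), i < j →
    (L.get ⟨j, hj⟩).1 ∉ edges (L.get ⟨i, hi⟩).2

/-- `m(H)`: maximum cardinality (length) of a `C`-matching. -/
noncomputable def maxCMatching (edges : E → Finset V) : ℕ :=
  sSup {k | ∃ L : List (V × E), IsCMatching edges L ∧ L.length = k}

/-- A chronological list of lazy burnings starting from `B0`: a list of pairs
`(hᵢ, vᵢ)` with `vᵢ ∈ hᵢ` and `hᵢ \ {vᵢ} ⊆ B_{i-1} = B0 ∪ {v₁, …, v_{i-1}}`. -/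
def IsChronList (edges : E → Finset V) (B0 : Set V) (L : List (E × V)) : Prop :=
  ∀ i (hi : i < L.length),
    (L.get ⟨i, hi⟩).2 ∈ edges (L.get ⟨i, hi⟩).1 ∧
    ∀ u, u ∈ edges (L.get ⟨i, hi⟩).1 → u ≠ (L.get ⟨i, hi⟩).2 →
      u ∈ B0 ∨ ∃ j, ∃ hj : j < L.length, j < i ∧ u = (L.get ⟨j, hj⟩).2

/-- The dual hypergraph: vertices are the hyperedges of `H`, and for each vertex
`v` of `H` there is a hyperedge `N(v) = {h : v ∈ h}`. -/
noncomputable def dualEdges [Fintype E] (edges : E → Finset V) (v : V) : Finset E :=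
  Finset.univ.filter (fun h => v ∈ edges h)

/-- `U` induces a subhypergraph all of whose hyperedges have cardinality `> 1`. -/
def GoodSet (edges : E → Finset V) (U : Finset V) : Prop :=
  ∀ h : E, ((edges h) ∩ U).Nonempty → 1 < ((edges h) ∩ U).card

/-- The vertex set of the core of `H`: the maximum induced subhypergraph all of
whose hyperedges have cardinality `> 1`. -/
noncomputable def coreSet [Fintype V] (edges : E → Finset V) : Finset V :=
  (Finset.univ : Finset V).powerset.sup (fun U => if GoodSet edges U then U else ∅)

/-- The zero forcing closure: a black vertex `u` with unique white neighbor `v`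
forces `v`. -/
inductive ZFClosure {α : Type*} (G : SimpleGraph α) (B : Set α) : α → Prop
  | init (v : α) : v ∈ B → ZFClosure G B v
  | force (u v : α) : ZFClosure G B u → G.Adj u v →
      (∀ w, G.Adj u w → w ≠ v → ZFClosure G B w) → ZFClosure G B v

def IsZeroForcingSet {α : Type*} (G : SimpleGraph α) (B : Set α) : Prop :=
  ∀ v, ZFClosure G B v

noncomputable def zeroForcingNumber {α : Type*} [Fintype α] (G : SimpleGraph α) : ℕ :=
  sInf {n | ∃ B : Finset α, B.card = n ∧ IsZeroForcingSet G ↑B}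

/-- The skew zero forcing closure: any vertex `u` (black or white) with a unique
white neighbor `v` forces `v`. -/
inductive SkewZFClosure {α : Type*} (G : SimpleGraph α) (B : Set α) : α → Prop
  | init (v : α) : v ∈ B → SkewZFClosure G B v
  | force (u v : α) : G.Adj u v →
      (∀ w, G.Adj u w → w ≠ v → SkewZFClosure G B w) → SkewZFClosure G B v

def IsSkewZeroForcingSet {α : Type*} (G : SimpleGraph α) (B : Set α) : Prop :=
  ∀ v, SkewZFClosure G B v

noncomputable def skewZeroForcingNumber {α : Type*} [Fintype α] (G : SimpleGraph α) : ℕ :=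
  sInf {n | ∃ B : Finset α, B.card = n ∧ IsSkewZeroForcingSet G ↑B}

/-- The incidence (Levi) graph of a hypergraph. -/
def incidenceGraph (edges : E → Finset V) : SimpleGraph (V ⊕ E) where
  Adj x y := (∃ v h, x = Sum.inl v ∧ y = Sum.inr h ∧ v ∈ edges h) ∨
             (∃ v h, x = Sum.inr h ∧ y = Sum.inl v ∧ v ∈ edges h)
  symm := by
    constructor
    rintro x y (⟨v, h, rfl, rfl, hm⟩ | ⟨v, h, rfl, rfl, hm⟩)
    · exact Or.inr ⟨v, h, rfl, rfl, hm⟩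
    · exact Or.inl ⟨v, h, rfl, rfl, hm⟩
  loopless := by
    constructor
    rintro x (⟨v, h, h1, h2, _⟩ | ⟨v, h, h1, h2, _⟩) <;> subst h1 <;> simp_all

/-- The star `K_{1,j}` with center `0`. -/
def starGraph (j : ℕ) : SimpleGraph (Fin (j + 1)) where
  Adj a b := a ≠ b ∧ (a = 0 ∨ b = 0)
  symm := ⟨fun _ _ ⟨hne, hor⟩ => ⟨hne.symm, hor.symm⟩⟩
  loopless := ⟨fun _ ha => ha.1 rfl⟩

end Defs

/-!
A lazy burning set and a `C`-matching of the incidence graph are complementary. Listing the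
vertices outside a lazy burning set `B` in the order in which they burn, each with the hyperedge
that burns it, gives a `C`-matching of length `|V| - |B|`; conversely, from the unmatched vertices
of a `C`-matching the matched ones burn, last to first. Hence `b_L(H) + m(H) = |V(H)|`.
Reversing a `C`-matching and swapping each pair `(v, h)` gives a `C`-matching of `H^*`, so
`m(H^*) = m(H)`.
-/

section CMatching

variable {V E : Type*} {edges : E → Finset V}

theorem Burns.mono {B B' : Set V} (hBB' : B ⊆ B') {v : V} (hv : Burns edges B v) :
    Burns edges B' v := by
  induction hv with
  | init v hv => exact .init v (hBB' hv)
  | spread h v hv _ ih => exact .spread h v hv ih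

theorem Burns.exists_forced_of_notMem {S : Set V} {v : V} (hv : Burns edges S v) (hvS : v ∉ S) :
    ∃ h w, w ∉ S ∧ w ∈ edges h ∧ ∀ u ∈ edges h, u ≠ w → u ∈ S := by
  induction hv with
  | init v hv => exact absurd hv hvS
  | spread h v hv _ ih =>
    by_cases hS : ∀ u ∈ edges h, u ≠ v → u ∈ S
    · exact ⟨h, v, hvS, hv, hS⟩
    · push Not at hS
      obtain ⟨u, hu, huv, huS⟩ := hS
      exact ih u hu huv huS

/-- The distinctness of the matched vertices is implied by the other two conditions. -/
theorem isCMatching_iff {L : List (V × E)} :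
    IsCMatching edges L ↔
      (∀ p ∈ L, p.1 ∈ edges p.2) ∧ L.Pairwise (fun p q => q.1 ∉ edges p.2) := by
  rw [IsCMatching, List.pairwise_iff_getElem]
  refine ⟨fun ⟨hmem, _, hlater⟩ => ⟨hmem, hlater⟩, fun ⟨hmem, hlater⟩ => ⟨hmem, ?_, hlater⟩⟩
  rw [List.Nodup, List.pairwise_map]
  refine List.Pairwise.imp_of_mem (R := fun p q => q.1 ∉ edges p.2)
    (fun hp _ hpq heq => hpq (heq ▸ hmem _ hp)) (List.pairwise_iff_getElem.mpr hlater)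

theorem IsCMatching.reverse_map_swap {edges' : V → Finset E}
    (hdual : ∀ v h, v ∈ edges h ↔ h ∈ edges' v) {L : List (V × E)} (hL : IsCMatching edges L) :
    IsCMatching edges' (L.reverse.map Prod.swap) := by
  rw [isCMatching_iff] at hL ⊢
  obtain ⟨hmem, hlater⟩ := hL
  refine ⟨?_, ?_⟩
  · simp only [List.mem_map, List.mem_reverse, forall_exists_index, and_imp]
    rintro _ p hp rfl
    exact (hdual _ _).mp (hmem p hp)
  · simpa only [List.pairwise_map, List.pairwise_reverse, Prod.fst_swap, Prod.snd_swap, ← hdual]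
      using hlater

theorem maxCMatching_dualEdges [Fintype E] :
    maxCMatching (dualEdges edges) = maxCMatching edges := by
  have hmem : ∀ v h, v ∈ edges h ↔ h ∈ dualEdges edges v := by simp [dualEdges]
  unfold maxCMatching
  congr 1
  ext k
  constructor
  · rintro ⟨L, hL, rfl⟩
    exact ⟨_, hL.reverse_map_swap (fun h v => (hmem v h).symm), by simp⟩
  · rintro ⟨L, hL, rfl⟩
    exact ⟨_, hL.reverse_map_swap hmem, by simp⟩

theorem IsCMatching.burns {B : Set V} {L : List (V × E)} (hL : IsCMatching edges L)
    (hB : ∀ v ∉ L.map Prod.fst, Burns edges B v) (v : V) : Burns edges B v := by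
  rw [isCMatching_iff] at hL
  induction L with
  | nil => exact hB v (by simp)
  | cons p L ih =>
    obtain ⟨hmem, hlater⟩ := hL
    rw [List.pairwise_cons] at hlater
    refine ih ⟨fun q hq => hmem q (by simp [hq]), hlater.2⟩ (fun u hu => ?_)
    by_cases hup : u = p.1
    · refine hup ▸ .spread p.2 p.1 (hmem p (by simp)) (fun w hw hwp => hB w ?_)
      simp only [List.map_cons, List.mem_cons, not_or]
      exact ⟨hwp, fun hwL => by
        obtain ⟨q, hq, rfl⟩ := List.mem_map.mp hwL
        exact hlater.1 q hq hw⟩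
    · exact hB u (by simp [hup, hu])

theorem IsCMatching.length_le [Fintype V] {L : List (V × E)} (hL : IsCMatching edges L) :
    L.length ≤ Fintype.card V := by
  simpa [List.toFinset_card_of_nodup hL.2.1] using (L.map Prod.fst).toFinset.card_le_univ

theorem lazyBurningNumber_add_length_le [Fintype V] {L : List (V × E)}
    (hL : IsCMatching edges L) : lazyBurningNumber edges + L.length ≤ Fintype.card V := by
  have hcard : ((L.map Prod.fst).toFinset)ᶜ.card = Fintype.card V - L.length := by
    simp [Finset.card_compl, List.toFinset_card_of_nodup hL.2.1]
  have hburn : IsLazyBurningSet edges ↑((L.map Prod.fst).toFinset)ᶜ :=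
    hL.burns fun v hv => .init v (by simpa using hv)
  have hle : lazyBurningNumber edges ≤ Fintype.card V - L.length := Nat.sInf_le ⟨_, hcard, hburn⟩
  have := hL.length_le
  omega

theorem IsLazyBurningSet.exists_cMatching [Fintype V] {S : Finset V}
    (hS : IsLazyBurningSet edges ↑S) :
    ∃ L : List (V × E), IsCMatching edges L ∧ (∀ p ∈ L, p.1 ∉ S) ∧
      S.card + L.length = Fintype.card V := by
  induction hn : Sᶜ.card generalizing S with
  | zero =>
    refine ⟨[], by simp [isCMatching_iff], by simp, ?_⟩
    rw [Finset.card_eq_zero, Finset.compl_eq_empty_iff] at hn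
    simp [hn]
  | succ n ih =>
    obtain ⟨v, hv⟩ := Finset.card_pos.mp (by rw [hn]; omega)
    obtain ⟨h, w, hwS, hwh, hforced⟩ :=
      (hS v).exists_forced_of_notMem (by simpa using Finset.mem_compl.mp hv)
    have hwS : w ∉ S := by simpa using hwS
    have hn' : (insert w S)ᶜ.card = n := by
      rw [Finset.compl_insert, Finset.card_erase_of_mem (Finset.mem_compl.mpr hwS), hn]; rfl
    obtain ⟨L, hL, hLS, hlen⟩ :=
      ih (fun u => (hS u).mono (by simp [Set.subset_insert])) hn'
    have hLh : ∀ p ∈ L, p.1 ∉ edges h := fun p hp hph => by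
      have hpw := hLS p hp
      rw [Finset.mem_insert, not_or] at hpw
      exact hpw.2 (by simpa using hforced p.1 hph hpw.1)
    refine ⟨(w, h) :: L, ?_, ?_, ?_⟩
    · rw [isCMatching_iff] at hL ⊢
      exact ⟨by simpa [hwh] using hL.1, List.pairwise_cons.mpr ⟨hLh, hL.2⟩⟩
    · simp only [List.mem_cons, forall_eq_or_imp]
      exact ⟨hwS, fun p hp hpS => hLS p hp (Finset.mem_insert_of_mem hpS)⟩
    · rw [Finset.card_insert_of_notMem hwS] at hlen
      simp only [List.length_cons]
      omega

theorem lazyBurningNumber_add_maxCMatching [Fintype V] :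
    lazyBurningNumber edges + maxCMatching edges = Fintype.card V := by
  obtain ⟨S, hScard, hS⟩ : lazyBurningNumber edges ∈
      {n | ∃ B : Finset V, B.card = n ∧ IsLazyBurningSet edges ↑B} :=
    Nat.sInf_mem ⟨_, Finset.univ, rfl, fun v => .init v (by simp)⟩
  obtain ⟨L, hL, -, hlen⟩ := hS.exists_cMatching
  have hmax : maxCMatching edges = L.length := IsGreatest.csSup_eq
    ⟨⟨L, hL, rfl⟩, by
      rintro _ ⟨L', hL', rfl⟩
      have := lazyBurningNumber_add_length_le hL'
      omega⟩
  omega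

end CMatching

theorem stmt5 {V E : Type*} [Fintype V] [Fintype E] (edges : E → Finset V) :
    (Fintype.card V : ℤ) - lazyBurningNumber edges =
        (Fintype.card E : ℤ) - lazyBurningNumber (dualEdges edges) ∧
    (lazyBurningNumber (dualEdges edges) : ℤ) =
        (Fintype.card E : ℤ) - Fintype.card V + lazyBurningNumber edges := by
  have hH := lazyBurningNumber_add_maxCMatching (edges := edges)
  have hdual := lazyBurningNumber_add_maxCMatching (edges := dualEdges edges)
  rw [maxCMatching_dualEdges] at hdual
  constructor <;> omega
end

section
/- For a hypergraph H, a subset B \subseteq V(H) is a lazy burning set for H if and only if B \cup E(H) is a zero forcing set for the incidence graph IG(H). In particular, z(IG(H)) \le b_L(H) + |E(H)|. -/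
open scoped Classical

/-!
Lazy burning in `H` is zero forcing in `IG(H)` once every hyperedge node is black: a black
hyperedge `h` forces its unique white neighbour exactly when `h` has a unique unburned vertex.
Conversely, the only white nodes are vertices, and a vertex can only be forced by a
hyperedge, so every forcing step is a burning step. A minimum lazy burning set together with
`E(H)` is therefore a zero forcing set, which gives the bound.
-/

section IncidenceGraph

variable {V E : Type*} (edges : E → Finset V)

@[simp]
theorem incidenceGraph_adj_inr_inl {v : V} {h : E} :
    (incidenceGraph edges).Adj (Sum.inr h) (Sum.inl v) ↔ v ∈ edges h := by
  simp [incidenceGraph]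

@[simp]
theorem incidenceGraph_not_adj_inl_inl {v w : V} :
    ¬(incidenceGraph edges).Adj (Sum.inl v) (Sum.inl w) := by
  simp [incidenceGraph]

@[simp]
theorem incidenceGraph_not_adj_inr_inr {h k : E} :
    ¬(incidenceGraph edges).Adj (Sum.inr h) (Sum.inr k) := by
  simp [incidenceGraph]

variable {edges}

theorem zfClosure_inl_of_burns {B : Set V} {v : V} (hv : Burns edges B v) :
    ZFClosure (incidenceGraph edges) (Sum.inl '' B ∪ Set.range Sum.inr) (Sum.inl v) := by
  induction hv with
  | init v hv => exact .init _ (Or.inl ⟨v, hv, rfl⟩)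
  | spread h v hvh _ ih =>
    refine .force (Sum.inr h) _ (.init _ (Or.inr ⟨h, rfl⟩)) (by simpa using hvh) ?_
    rintro (u | k) hadj hne
    · exact ih u (by simpa using hadj) (by simpa using hne)
    · exact absurd hadj (incidenceGraph_not_adj_inr_inr edges)

theorem burns_of_zfClosure_inl {B : Set V} {v : V}
    (hv : ZFClosure (incidenceGraph edges) (Sum.inl '' B ∪ Set.range Sum.inr) (Sum.inl v)) :
    Burns edges B v := by
  generalize hx : Sum.inl v = x at hv
  induction hv generalizing v with
  | init x hx' =>
    subst hx
    obtain ⟨w, hw, hwv⟩ | ⟨k, hk⟩ := hx'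
    · exact .init _ (Sum.inl_injective hwv ▸ hw)
    · exact absurd hk Sum.inr_ne_inl
  | force u x _ hadj _ _ ih =>
    subst hx
    obtain (w | h) := u
    · exact absurd hadj (incidenceGraph_not_adj_inl_inl edges)
    refine .spread h v (by simpa using hadj) fun w hw hne => ?_
    exact ih (Sum.inl w) (by simpa using hw) (by simpa using hne) rfl

theorem isLazyBurningSet_iff_isZeroForcingSet_incidenceGraph (B : Set V) :
    IsLazyBurningSet edges B ↔
      IsZeroForcingSet (incidenceGraph edges) (Sum.inl '' B ∪ Set.range Sum.inr) := by
  refine ⟨fun hB x => ?_, fun hZF v => burns_of_zfClosure_inl (hZF (Sum.inl v))⟩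
  obtain (v | h) := x
  · exact zfClosure_inl_of_burns (hB v)
  · exact .init _ (Or.inr ⟨h, rfl⟩)

theorem exists_isLazyBurningSet_card_eq_lazyBurningNumber [Fintype V] :
    ∃ B : Finset V, B.card = lazyBurningNumber edges ∧ IsLazyBurningSet edges ↑B :=
  Nat.sInf_mem (s := {n | ∃ B : Finset V, B.card = n ∧ IsLazyBurningSet edges ↑B})
    ⟨_, Finset.univ, rfl, fun v => .init v (by simp)⟩

end IncidenceGraph

theorem zeroForcingNumber_le_card {α : Type*} [Fintype α] {G : SimpleGraph α} {B : Finset α}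
    (hB : IsZeroForcingSet G ↑B) : zeroForcingNumber G ≤ B.card :=
  Nat.sInf_le ⟨B, rfl, hB⟩

theorem stmt17 {V E : Type*} [Fintype V] [Fintype E] (edges : E → Finset V) :
    (∀ B : Set V, IsLazyBurningSet edges B ↔
        IsZeroForcingSet (incidenceGraph edges) (Sum.inl '' B ∪ Set.range Sum.inr)) ∧
    zeroForcingNumber (incidenceGraph edges) ≤ lazyBurningNumber edges + Fintype.card E := by
  refine ⟨isLazyBurningSet_iff_isZeroForcingSet_incidenceGraph, ?_⟩
  obtain ⟨B, hBcard, hB⟩ := exists_isLazyBurningSet_card_eq_lazyBurningNumber (edges := edges)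
  set S : Finset (V ⊕ E) := B.map .inl ∪ Finset.univ.map .inr
  have hZF : IsZeroForcingSet (incidenceGraph edges) ↑S := by
    simpa [S] using (isLazyBurningSet_iff_isZeroForcingSet_incidenceGraph (B : Set V)).mp hB
  calc zeroForcingNumber (incidenceGraph edges)
      ≤ S.card := zeroForcingNumber_le_card hZF
    _ ≤ (B.map .inl).card + (Finset.univ.map .inr).card := Finset.card_union_le _ _
    _ = lazyBurningNumber edges + Fintype.card E := by simp [hBcard]
end
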